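/- Let f : H → ℝ be Fréchet differentiable on a real Hilbert space H with ∇f Lipschitz continuous with constant L_f, let g : H → ℝ ∪ {+∞} be bounded below and proper, let L > L_f, and suppose f is bounded below. Define a sequence (u_k) by choosing u_{k+1} as a global minimizer of u ↦ f(u_k) + ⟨∇f(u_k), u - u_k⟩ + (L/2)‖u - u_k‖² + g(u). Then: (a) f(u_{k+1}) + g(u_{k+1}) ≤ f(u_k) + g(u_k) - ((L - L_f)/2)‖u_{k+1} - u_k‖² for all k; (b) the sequence (f(u_k) + g(u_k)) is monotonically decreasing and convergent; (c) Σ_{k=1}^∞ ‖u_{k+1} - u_k‖² < ∞, so ‖u_{k+1} - u_k‖ → 0. -/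

import Mathlib

open Filter Topology
open scoped RealInnerProductSpace NNReal

/-!
By the descent lemma, `f (u (k+1))` exceeds its linearization at `u k` by at most
`(L_f / 2) ‖u (k+1) - u k‖²`. Since `u (k+1)` does at least as well as `u k` in the proximal
model, whose value at `u k` is `f (u k) + g (u k)`, the objective drops by at least
`((L - L_f) / 2) ‖u (k+1) - u k‖²` per step; telescoping against the lower bound of `f + g`
makes these squared steps summable.
-/

section DescentLemma

variable {H : Type*} [NormedAddCommGroup H] [InnerProductSpace ℝ H]

theorem HasGradientAt.hasDerivAt_comp_add_smul [CompleteSpace H] {f : H → ℝ} {x d v : H}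
    {t : ℝ} (hf : HasGradientAt f v (x + t • d)) :
    HasDerivAt (fun s : ℝ => f (x + s • d)) ⟪v, d⟫ t := by
  have hline : HasDerivAt (fun s : ℝ => x + s • d) d t := by
    simpa using ((hasDerivAt_id t).smul_const d).const_add x
  simpa [Function.comp_def, real_inner_comm] using hf.hasFDerivAt.comp_hasDerivAt t hline

theorem LipschitzWith.inner_sub_le {f' : H → H} {Lf : ℝ≥0} (hlip : LipschitzWith Lf f')
    (x d : H) {t : ℝ} (ht : 0 ≤ t) :
    ⟪f' (x + t • d) - f' x, d⟫ ≤ Lf * t * ‖d‖ ^ 2 :=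
  calc ⟪f' (x + t • d) - f' x, d⟫
      ≤ ‖f' (x + t • d) - f' x‖ * ‖d‖ := real_inner_le_norm _ _
    _ ≤ Lf * ‖(x + t • d) - x‖ * ‖d‖ := by
        gcongr
        simpa only [dist_eq_norm] using hlip.dist_le_mul (x + t • d) x
    _ = Lf * t * ‖d‖ ^ 2 := by
        rw [add_sub_cancel_left, norm_smul, Real.norm_of_nonneg ht]
        ring

theorem descent_lemma [CompleteSpace H] {f : H → ℝ} {f' : H → H}
    (hdiff : ∀ x, HasGradientAt f (f' x) x) {Lf : ℝ≥0} (hlip : LipschitzWith Lf f') (x y : H) :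
    f y ≤ f x + ⟪f' x, y - x⟫ + Lf / 2 * ‖y - x‖ ^ 2 := by
  set d := y - x
  -- `φ t` is the gap between `f` and its quadratic upper model along the segment from `x`.
  let φ : ℝ → ℝ := fun t => f (x + t • d) - ⟪f' x, d⟫ * t - Lf / 2 * ‖d‖ ^ 2 * t ^ 2
  have hφ : ∀ t, HasDerivAt φ (⟪f' (x + t • d) - f' x, d⟫ - Lf * ‖d‖ ^ 2 * t) t := by
    intro t
    have hquad := (hasDerivAt_pow 2 t).const_mul (Lf / 2 * ‖d‖ ^ 2 : ℝ)
    refine (((hdiff _).hasDerivAt_comp_add_smul.sub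
      ((hasDerivAt_id t).const_mul ⟪f' x, d⟫)).sub hquad).congr_deriv ?_
    rw [inner_sub_left]
    push_cast
    ring
  have hanti : AntitoneOn φ (Set.Ici 0) := by
    refine antitoneOn_of_hasDerivWithinAt_nonpos (convex_Ici 0)
      (fun t _ => (hφ t).continuousAt.continuousWithinAt)
      (fun t _ => (hφ t).hasDerivWithinAt) fun t ht => ?_
    rw [interior_Ici] at ht
    linarith [hlip.inner_sub_le x d (le_of_lt ht)]
  have h01 : φ 1 ≤ φ 0 := hanti Set.self_mem_Ici (Set.mem_Ici.2 zero_le_one) zero_le_one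
  simp only [φ, d, one_smul, zero_smul, add_zero, add_sub_cancel] at h01
  linarith

end DescentLemma

section ProximalGradient

variable {H : Type*} [NormedAddCommGroup H] [InnerProductSpace ℝ H]

/-- The objective of a proximal gradient step from `x` with step size `1 / L`. -/
noncomputable def proxGradModel (f : H → ℝ) (f' : H → H) (L : ℝ) (g : H → ℝ) (x v : H) : ℝ :=
  f x + ⟪f' x, v - x⟫ + L / 2 * ‖v - x‖ ^ 2 + g v

theorem proxGradModel_self (f : H → ℝ) (f' : H → H) (L : ℝ) (g : H → ℝ) (x : H) :
    proxGradModel f f' L g x x = f x + g x := by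
  simp [proxGradModel]

theorem sufficient_decrease_of_isMinOn_proxGradModel [CompleteSpace H] {f : H → ℝ}
    {f' : H → H} (hdiff : ∀ x, HasGradientAt f (f' x) x) {Lf : ℝ≥0} (hlip : LipschitzWith Lf f')
    {L : ℝ} {g : H → ℝ} {x x' : H} (hmin : IsMinOn (proxGradModel f f' L g x) Set.univ x') :
    f x' + g x' ≤ f x + g x - (L - Lf) / 2 * ‖x' - x‖ ^ 2 := by
  have hstep : proxGradModel f f' L g x x' ≤ f x + g x :=
    proxGradModel_self f f' L g x ▸ hmin (Set.mem_univ x)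
  have := descent_lemma hdiff hlip x x'
  unfold proxGradModel at hstep
  linarith

end ProximalGradient

theorem summable_of_succ_le_sub_mul {a b : ℕ → ℝ} {c m : ℝ} (hc : 0 < c) (hb : ∀ k, 0 ≤ b k)
    (ha : ∀ k, m ≤ a k) (hdec : ∀ k, a (k + 1) ≤ a k - c * b k) : Summable b := by
  refine summable_of_sum_range_le hb (c := (a 0 - m) / c) fun n => ?_
  rw [le_div_iff₀' hc, Finset.mul_sum]
  calc ∑ i ∈ Finset.range n, c * b i
      ≤ ∑ i ∈ Finset.range n, (a i - a (i + 1)) :=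
        Finset.sum_le_sum fun i _ => by linarith [hdec i]
    _ = a 0 - a n := Finset.sum_range_sub' a n
    _ ≤ a 0 - m := by linarith [ha n]

theorem proximal_gradient_descent
    {H : Type*} [NormedAddCommGroup H] [InnerProductSpace ℝ H] [CompleteSpace H]
    (f : H → ℝ) (f' : H → H) (hdiff : ∀ x, HasGradientAt f (f' x) x)
    (Lf : ℝ≥0) (hlip : LipschitzWith Lf f') (L : ℝ) (hL : (Lf : ℝ) < L)
    (g : H → ℝ) (mg : ℝ) (hg : ∀ x, mg ≤ g x) (mf : ℝ) (hf : ∀ x, mf ≤ f x)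
    (u : ℕ → H)
    (hiter : ∀ (k : ℕ) (v : H),
      f (u k) + ⟪f' (u k), u (k + 1) - u k⟫ + L / 2 * ‖u (k + 1) - u k‖ ^ 2 + g (u (k + 1)) ≤
        f (u k) + ⟪f' (u k), v - u k⟫ + L / 2 * ‖v - u k‖ ^ 2 + g v) :
    (∀ k : ℕ, f (u (k + 1)) + g (u (k + 1)) ≤
        f (u k) + g (u k) - (L - Lf) / 2 * ‖u (k + 1) - u k‖ ^ 2) ∧
    (Antitone (fun k => f (u k) + g (u k)) ∧
      ∃ c : ℝ, Tendsto (fun k => f (u k) + g (u k)) atTop (𝓝 c)) ∧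
    (Summable (fun k : ℕ => ‖u (k + 1) - u k‖ ^ 2) ∧
      Tendsto (fun k : ℕ => ‖u (k + 1) - u k‖) atTop (𝓝 0)) := by
  have hc : 0 < (L - Lf) / 2 := by linarith
  have hdec : ∀ k, f (u (k + 1)) + g (u (k + 1)) ≤
      f (u k) + g (u k) - (L - Lf) / 2 * ‖u (k + 1) - u k‖ ^ 2 := fun k =>
    sufficient_decrease_of_isMinOn_proxGradModel hdiff hlip fun v _ => hiter k v
  have hbdd : ∀ k, mf + mg ≤ f (u k) + g (u k) := fun k => add_le_add (hf _) (hg _)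
  have hanti : Antitone fun k => f (u k) + g (u k) :=
    antitone_nat_of_succ_le fun k =>
      (hdec k).trans (sub_le_self _ (mul_nonneg hc.le (sq_nonneg _)))
  have hsum : Summable fun k => ‖u (k + 1) - u k‖ ^ 2 :=
    summable_of_succ_le_sub_mul hc (fun k => sq_nonneg _) hbdd hdec
  refine ⟨hdec, ⟨hanti, _, tendsto_atTop_ciInf hanti ⟨mf + mg, ?_⟩⟩, hsum, ?_⟩
  · rintro _ ⟨k, rfl⟩
    exact hbdd k
  · simpa [Real.sqrt_sq (norm_nonneg _)] using hsum.tendsto_atTop_zero.sqrt
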